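/- arXiv:1501.01734 — 3 statements merged into one kernel-verified Lean document; each statement's English description precedes it below -/
import Mathlib

section
/- Let m ≥ 2, let r : Fin m → ℤ with r 0 = 0 and r i ≠ 0 for i ≥ 1. Then the lasso degree of the m-tuple (0, r_2, ..., r_m) equals the lasso degree of the (m-2)-tuple (r_3, ..., r_m). -/
/-- The lasso sign sequence: `r̄ 0 = 1`, and `r̄ (i+1) = (-1)^(1 + r i)` if `r̄ i = 1`,
and `r̄ (i+1) = 1` if `r̄ i = -1`. -/
def lassoSign (r : ℕ → ℤ) : ℕ → ℤ
  | 0 => 1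
  | (i + 1) => if lassoSign r i = 1 then (((-1 : ℤˣ) ^ (1 + r i) : ℤˣ) : ℤ) else 1

/-- The degree of the lasso `L(r_1, ..., r_m)`: the sum `∑_{i=0}^m r̄_i`. -/
def lassoDeg (m : ℕ) (r : ℕ → ℤ) : ℤ := ∑ i ∈ Finset.range (m + 1), lassoSign r i

lemma lassoSign_one (r : ℕ → ℤ) (h0 : r 0 = 0) : lassoSign r 1 = -1 := by
  simp [lassoSign, h0]

lemma lassoSign_shift (r : ℕ → ℤ) (h0 : r 0 = 0) :
    ∀ i, lassoSign r (i + 2) = lassoSign (fun j => r (j + 2)) i := by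
  intro i
  induction i with
  | zero =>
      show lassoSign r (1 + 1) = 1
      rw [lassoSign, lassoSign_one r h0]
      norm_num
  | succ n ih =>
      show lassoSign r (n + 2 + 1) = _
      rw [lassoSign, ih]
      rfl

/-- The lasso degree of `(0, r_2, ..., r_m)` equals the lasso degree of `(r_3, ..., r_m)`. -/
theorem stmt5 (m : ℕ) (hm : 2 ≤ m) (r : ℕ → ℤ) (h0 : r 0 = 0)
    (hr : ∀ i, 1 ≤ i → i < m → r i ≠ 0) :
    lassoDeg m r = lassoDeg (m - 2) (fun i => r (i + 2)) := by
  obtain ⟨k, rfl⟩ : ∃ k, m = k + 2 := ⟨m - 2, by omega⟩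
  unfold lassoDeg
  rw [show k + 2 + 1 = k + 1 + 1 + 1 from rfl, Finset.sum_range_succ',
    Finset.sum_range_succ']
  simp only [Nat.add_sub_cancel]
  have : ∀ i, lassoSign r (i + 1 + 1) = lassoSign (fun j => r (j + 2)) i :=
    fun i => lassoSign_shift r h0 i
  rw [Finset.sum_congr rfl (fun i _ => this i)]
  simp [lassoSign, lassoSign_one r h0, h0]
end

section
/- Let F = ℚ(s) with t = s². Define J(r) = (-t)^{-r} · z₀ - s·(1 - (-t)^{-r})/(t + 1) · z₂ in F[z₀, z₂]. Suppose r₁ ≠ r₂ are natural numbers of the same parity, and suppose c ∈ F is such that substituting z₀ = 1 and z₂ = c gives J(r₁)|_{z₀=1,z₂=c} = J(r₂)|_{z₀=1,z₂=c}. Then c = -s - s⁻¹. -/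
noncomputable section

/-- `s` plays the role of `t^{1/2}` in the field `ℚ(s)`. -/
abbrev s : RatFunc ℚ := RatFunc.X

/-- `t = s²`. -/
abbrev t : RatFunc ℚ := s ^ 2

/-- The Jones polynomial in the solid torus of `L(r)`, substituted at `z₀ = 1, z₂ = c`. -/
def Jval (r : ℕ) (c : RatFunc ℚ) : RatFunc ℚ :=
  (-t) ^ (-(r : ℤ)) * 1 - s * (1 - (-t) ^ (-(r : ℤ))) / (t + 1) * c

lemma s_ne_zero : (s : RatFunc ℚ) ≠ 0 := RatFunc.X_ne_zero

lemma neg_t_ne_zero : (-t : RatFunc ℚ) ≠ 0 := by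
  simpa using pow_ne_zero 2 s_ne_zero

lemma neg_t_pow_ne_one (d : ℕ) (hd : d ≠ 0) : (-t : RatFunc ℚ) ^ d ≠ 1 := by
  intro hone
  have halg : (-t : RatFunc ℚ) ^ d =
      algebraMap (Polynomial ℚ) (RatFunc ℚ) ((-Polynomial.X ^ 2) ^ d) := by
    rw [map_pow, map_neg, map_pow, RatFunc.algebraMap_X]
  have h1 : (algebraMap (Polynomial ℚ) (RatFunc ℚ)) ((-Polynomial.X ^ 2) ^ d)
      = algebraMap (Polynomial ℚ) (RatFunc ℚ) 1 := by
    rw [← halg, hone, map_one]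
  have hp : ((-Polynomial.X ^ 2 : Polynomial ℚ)) ^ d = 1 :=
    IsFractionRing.injective (Polynomial ℚ) (RatFunc ℚ) h1
  have hdeg : (((-Polynomial.X ^ 2 : Polynomial ℚ)) ^ d).natDegree = 2 * d := by
    rw [Polynomial.natDegree_pow, Polynomial.natDegree_neg, Polynomial.natDegree_X_pow]
    ring
  rw [hp] at hdeg
  simp at hdeg
  omega

lemma neg_t_zpow_inj : Function.Injective fun r : ℕ => (-t : RatFunc ℚ) ^ (-(r : ℤ)) := by
  intro r₁ r₂ hEq
  by_contra hne
  wlog hlt : r₁ < r₂ generalizing r₁ r₂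
  · exact this hEq.symm (Ne.symm hne) (by omega)
  simp only at hEq
  have key : (-t : RatFunc ℚ) ^ ((r₂ : ℤ) + -(r₁ : ℤ)) = 1 := by
    rw [zpow_add₀ neg_t_ne_zero, hEq, ← zpow_add₀ neg_t_ne_zero]
    simp
  have h2 : (-t : RatFunc ℚ) ^ (r₂ - r₁) = 1 := by
    rw [← zpow_natCast]
    rw [← key]
    congr 1
    omega
  exact neg_t_pow_ne_one (r₂ - r₁) (by omega) h2

theorem stmt13 (r₁ r₂ : ℕ) (hne : r₁ ≠ r₂) (hpar : r₁ % 2 = r₂ % 2)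
    (c : RatFunc ℚ) (h : Jval r₁ c = Jval r₂ c) :
    c = -s - s⁻¹ := by
  set a := (-t : RatFunc ℚ) ^ (-(r₁ : ℤ)) with ha
  set b := (-t : RatFunc ℚ) ^ (-(r₂ : ℤ)) with hb
  have hab : a ≠ b := fun hEq => hne (neg_t_zpow_inj hEq)
  have ht1 : (t + 1 : RatFunc ℚ) ≠ 0 := by
    intro h0
    have : (algebraMap (Polynomial ℚ) (RatFunc ℚ)) (Polynomial.X ^ 2 + 1) = 0 := by
      simpa [map_add, map_pow] using h0
    have := (map_eq_zero_iff _ (IsFractionRing.injective (Polynomial ℚ) (RatFunc ℚ))).mp this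
    have h2 := congrArg (fun p => Polynomial.coeff p 2) this
    norm_num [Polynomial.coeff_one] at h2
  unfold Jval at h
  rw [← ha, ← hb] at h
  have key : (a - b) * ((t + 1) + s * c) = 0 := by
    field_simp at h
    linear_combination h
  have h2 : (t + 1) + s * c = 0 := by
    rcases mul_eq_zero.mp key with h' | h'
    · exact absurd (sub_eq_zero.mp h') hab
    · exact h'
  have hc : c = -(t + 1) / s := by
    rw [eq_div_iff s_ne_zero]
    linear_combination h2
  have hs := s_ne_zero
  rw [hc]
  field_simp
  ring
end
end

section
/- Let F = ℚ(s) with t = s². Define J₁(r) = (-t^{-1} + (-t)^{-r}(t^{-1} + 1))·z₁ + ((1 - (-t)^{-r})/(t + 1))·z₃ in F[z₁, z₃]. Suppose r₁ ≠ r₂ are natural numbers of the same parity, and suppose a, b ∈ F with a ≠ 0 are such that substituting z₁ = a, z₃ = b gives equal values J₁(r₁) = J₁(r₂). Then b = a·(s + s⁻¹)². -/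
noncomputable section

/-- The Jones polynomial in the solid torus of `L(1, r)`, substituted at `z₁ = a, z₃ = b`. -/
def J₁val (r : ℕ) (a b : RatFunc ℚ) : RatFunc ℚ :=
  (-t⁻¹ + (-t) ^ (-(r : ℤ)) * (t⁻¹ + 1)) * a + ((1 - (-t) ^ (-(r : ℤ))) / (t + 1)) * b

lemma negt_eq : (-t : RatFunc ℚ) = algebraMap (Polynomial ℚ) _ (-(Polynomial.X ^ 2)) := by
  rw [map_neg, map_pow, RatFunc.algebraMap_X]

lemma negt_pow_inj {r₁ r₂ : ℕ} (hne : r₁ ≠ r₂) :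
    ((-t) ^ (-(r₁ : ℤ)) : RatFunc ℚ) ≠ (-t) ^ (-(r₂ : ℤ)) := by
  intro heq
  rw [zpow_neg, zpow_neg, inv_inj, zpow_natCast, zpow_natCast, negt_eq,
    ← map_pow, ← map_pow] at heq
  have hpoly := RatFunc.algebraMap_injective ℚ heq
  have hdeg := congrArg Polynomial.natDegree hpoly
  simp [Polynomial.natDegree_pow, Polynomial.natDegree_X_pow] at hdeg
  exact hne hdeg

lemma t_add_one_ne_zero : (t : RatFunc ℚ) + 1 ≠ 0 := by
  intro h0
  have h1 : (algebraMap (Polynomial ℚ) (RatFunc ℚ)) (Polynomial.X ^ 2 + 1) = 0 := by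
    rw [map_add, map_pow, RatFunc.algebraMap_X, map_one]; exact h0
  rw [← map_zero (algebraMap (Polynomial ℚ) (RatFunc ℚ))] at h1
  have h2 := RatFunc.algebraMap_injective ℚ h1
  have h3 := congrArg (Polynomial.eval 1) h2
  simp at h3

theorem stmt14 (r₁ r₂ : ℕ) (hne : r₁ ≠ r₂) (hpar : r₁ % 2 = r₂ % 2)
    (a b : RatFunc ℚ) (ha : a ≠ 0) (h : J₁val r₁ a b = J₁val r₂ a b) :
    b = a * (s + s⁻¹) ^ 2 := by
  have hs : (s : RatFunc ℚ) ≠ 0 := RatFunc.X_ne_zero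
  have ht : (t : RatFunc ℚ) ≠ 0 := pow_ne_zero _ hs
  have ht1 : (t : RatFunc ℚ) + 1 ≠ 0 := t_add_one_ne_zero
  set u := ((-t) ^ (-(r₁ : ℤ)) : RatFunc ℚ) with hu
  set v := ((-t) ^ (-(r₂ : ℤ)) : RatFunc ℚ) with hv
  have huv : u ≠ v := negt_pow_inj hne
  unfold J₁val at h
  rw [← hu, ← hv] at h
  field_simp at h
  have key : (u - v) * ((t + 1) * (t + 1) * a - b * t) = 0 := by
    linear_combination h
  have hb : b * t = (t + 1) * (t + 1) * a := by
    rcases mul_eq_zero.mp key with h1 | h2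
    · exact absurd (sub_eq_zero.mp h1) huv
    · linear_combination -h2
  field_simp
  linear_combination hb

end
end
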